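/- arXiv:math/0601454 — 3 statements merged into one kernel-verified Lean document; each statement's English description precedes it below -/
import Mathlib

section
/- The presented group with generators x₁, x₂, x₃, x₄ and defining relations (x₃x₄)² = (x₄x₃)², x₂ = x₄x₃x₄⁻¹, x₁ = x₄, (x₁x₂)² = (x₂x₁)², x₃ = x₂x₁x₂x₁⁻¹x₂⁻¹, x₄ = x₃x₂x₁x₂⁻¹x₃⁻¹, and x₄x₃x₂x₁ = e is isomorphic to the presented group ⟨a₁, a₂ | (a₁a₂)² = e⟩. -/
/-!
The relations `x₁ = x₄` and `x₂ = x₄x₃x₄⁻¹` are Tietze eliminations of `x₁` and `x₂`, after which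
`x₄x₃x₂x₁ = e` reads `(x₄x₃)² = e`. So `x₄ ↦ a₁`, `x₃ ↦ a₂` should be an isomorphism, with inverse
sending `(x₁, x₂, x₃, x₄)` to `(a₁, a₁a₂a₁⁻¹, a₂, a₁)`; that this respects the remaining relators is
a computation in `⟨a₁, c | c² = e⟩`, where `c = a₁a₂`.
-/

private def x : Fin 4 → FreeGroup (Fin 4) := FreeGroup.of

def relsA2vk : Set (FreeGroup (Fin 4)) :=
  { (x 2 * x 3) ^ 2 * ((x 3 * x 2) ^ 2)⁻¹,
    x 1 * (x 3 * x 2 * (x 3)⁻¹)⁻¹,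
    x 0 * (x 3)⁻¹,
    (x 0 * x 1) ^ 2 * ((x 1 * x 0) ^ 2)⁻¹,
    x 2 * (x 1 * x 0 * x 1 * (x 0)⁻¹ * (x 1)⁻¹)⁻¹,
    x 3 * (x 2 * x 1 * x 0 * (x 1)⁻¹ * (x 2)⁻¹)⁻¹,
    x 3 * x 2 * x 1 * x 0 }

def relA2 : Set (FreeGroup (Fin 2)) :=
  {(FreeGroup.of 0 * FreeGroup.of 1) ^ 2}

namespace PresentedGroup

variable {α β : Type*} {rels₁ : Set (FreeGroup α)} {rels₂ : Set (FreeGroup β)}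

def mulEquivOfInverseGenerators (f : α → PresentedGroup rels₂) (g : β → PresentedGroup rels₁)
    (hf : ∀ r ∈ rels₁, FreeGroup.lift f r = 1) (hg : ∀ r ∈ rels₂, FreeGroup.lift g r = 1)
    (hgf : ∀ i, toGroup hg (f i) = of i) (hfg : ∀ j, toGroup hf (g j) = of j) :
    PresentedGroup rels₁ ≃* PresentedGroup rels₂ :=
  MonoidHom.toMulEquiv (toGroup hf) (toGroup hg)
    (ext fun i => by simpa [toGroup.of] using hgf i)
    (ext fun j => by simpa [toGroup.of] using hfg j)

end PresentedGroup

section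

variable {H : Type*} [Group H] {a b : H}

theorem lift_relA2_eq_one (hab : (a * b) ^ 2 = 1) : ∀ r ∈ relA2, FreeGroup.lift ![a, b] r = 1 := by
  rintro r rfl
  simpa using hab

theorem lift_relsA2vk_eq_one (hab : (a * b) ^ 2 = 1) :
    ∀ r ∈ relsA2vk, FreeGroup.lift ![a, a * b * a⁻¹, b, a] r = 1 := by
  obtain ⟨c, rfl⟩ : ∃ c, b = a⁻¹ * c := ⟨a * b, by group⟩
  have hcc : c * c = 1 := by simpa [pow_two] using hab
  have hc_inv : c⁻¹ = c := inv_eq_of_mul_eq_one_right hcc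
  have hcc' : ∀ z, c * (c * z) = z := fun z => by rw [← mul_assoc, hcc, one_mul]
  simp only [relsA2vk, Set.mem_insert_iff, Set.mem_singleton_iff]
  -- free reduction together with `c⁻¹ = c` and `c * c = 1` is a complete rewriting system here
  rintro r (rfl | rfl | rfl | rfl | rfl | rfl | rfl) <;>
    simp [x, pow_two, mul_assoc, hc_inv, hcc, hcc']

end

namespace relsA2vk

open PresentedGroup

theorem of_zero : (of 0 : PresentedGroup relsA2vk) = of 3 :=
  mk_eq_mk_of_mul_inv_mem (x := x 0) (y := x 3) (by simp [relsA2vk])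

theorem of_one : (of 1 : PresentedGroup relsA2vk) = of 3 * of 2 * (of 3)⁻¹ :=
  mk_eq_mk_of_mul_inv_mem (x := x 1) (y := x 3 * x 2 * (x 3)⁻¹) (by simp [relsA2vk])

theorem of_three_mul_of_two_sq : (of 3 * of 2 : PresentedGroup relsA2vk) ^ 2 = 1 := by
  have h : (of 3 * of 2 * of 1 * of 0 : PresentedGroup relsA2vk) = 1 :=
    one_of_mem (x := x 3 * x 2 * x 1 * x 0) (by simp [relsA2vk])
  rw [of_one, of_zero] at h
  simpa [pow_two, mul_assoc] using h

end relsA2vk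

open PresentedGroup in
theorem presentation_A2 :
    Nonempty (PresentedGroup relsA2vk ≃* PresentedGroup relA2) := by
  have hab : (of 0 * of 1 : PresentedGroup relA2) ^ 2 = 1 := one_of_mem rfl
  refine ⟨mulEquivOfInverseGenerators _ _ (lift_relsA2vk_eq_one hab)
    (lift_relA2_eq_one relsA2vk.of_three_mul_of_two_sq) ?_ ?_⟩
  · intro i
    fin_cases i <;> simp [toGroup.of, relsA2vk.of_zero, relsA2vk.of_one]
  · intro j
    fin_cases j <;> simp [toGroup.of]
end

section
/- Let G be a group, let a₁,…,aₙ ∈ G (n ≥ 1), and let m be a positive integer. Then the following are equivalent: (1) the m-th powers of all n cyclic rotations of the product aₙaₙ₋₁⋯a₁ are equal, i.e. (aₙaₙ₋₁⋯a₁)^m = (a₁aₙ⋯a₂)^m = (a₂a₁aₙ⋯a₃)^m = ⋯ = (aₙ₋₁aₙ₋₂⋯a₁aₙ)^m; (2) every aᵢ (1 ≤ i ≤ n) commutes with (aₙaₙ₋₁⋯a₁)^m. In particular, for each k with 1 ≤ k ≤ n one has (aₖ₋₁aₖ₋₂⋯a₁aₙ⋯aₖ)^m = (aₖ₋₁aₖ₋₂⋯a₁)·(aₙaₙ₋₁⋯a₁)^m·(aₖ₋₁aₖ₋₂⋯a₁)⁻¹.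 -/
/-- The `k`-th cyclic rotation (`k = r+1`) of the descending product `aₙaₙ₋₁⋯a₁`:
the element `aₖ₋₁aₖ₋₂⋯a₁ ⬝ aₙaₙ₋₁⋯aₖ` (here `a i` stands for `a_{i+1}`). -/
def rotProd {G : Type*} [Monoid G] (n : ℕ) (a : Fin n → G) (r : ℕ) : G :=
  (((List.finRange n).take r).reverse.map a).prod *
    (((List.finRange n).drop r).reverse.map a).prod

/-- The descending partial product `aₖ₋₁aₖ₋₂⋯a₁` (`k = r+1`, and `a i` stands for `a_{i+1}`). -/
def prefProd {G : Type*} [Monoid G] (n : ℕ) (a : Fin n → G) (r : ℕ) : G :=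
  (((List.finRange n).take r).reverse.map a).prod

/-!
Writing `F = aₙ⋯a₁` and `Pᵣ = aᵣ⋯a₁`, the `r`-th rotation is `Pᵣ (aₙ⋯aᵣ₊₁) = Pᵣ F Pᵣ⁻¹`, so its
`m`-th power is `Pᵣ Fᵐ Pᵣ⁻¹`. Hence all these powers agree iff `P₀, …, Pₙ₋₁` commute with `Fᵐ`,
and since `Pₙ = F` does as well, iff all `P₀, …, Pₙ` do. As `P₀ = 1` and `Pᵣ₊₁ = aᵣ₊₁ Pᵣ`, that
holds iff every `aᵢ` commutes with `Fᵐ`.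
-/

section Monoid

variable {M : Type*} [Monoid M] {n : ℕ} (a : Fin n → M)

theorem suffProd_mul_prefProd (r : ℕ) :
    (((List.finRange n).drop r).reverse.map a).prod * prefProd n a r = rotProd n a 0 := by
  rw [prefProd, ← List.prod_append, ← List.map_append, ← List.reverse_append,
    List.take_append_drop]
  simp [rotProd]

theorem prefProd_self : prefProd n a n = rotProd n a 0 := by
  simpa [List.drop_eq_nil_of_le] using suffProd_mul_prefProd a n

theorem prefProd_succ {r : ℕ} (hr : r < n) :
    prefProd n a (r + 1) = a ⟨r, hr⟩ * prefProd n a r := by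
  simp [prefProd, List.take_add_one, hr]

theorem Commute.prefProd_left {g : M} (h : ∀ i, Commute (a i) g) (r : ℕ) :
    Commute (prefProd n a r) g :=
  Commute.list_prod_left _ _ fun _ hx => by
    obtain ⟨i, -, rfl⟩ := List.mem_map.1 hx
    exact h i

end Monoid

section Group

variable {G : Type*} [Group G] {n : ℕ} (a : Fin n → G)

theorem rotProd_eq_conj (r : ℕ) :
    rotProd n a r = prefProd n a r * rotProd n a 0 * (prefProd n a r)⁻¹ := by
  rw [← suffProd_mul_prefProd a r]
  simp [rotProd, prefProd, mul_assoc]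

theorem rotProd_pow_eq_conj (r m : ℕ) :
    rotProd n a r ^ m = prefProd n a r * rotProd n a 0 ^ m * (prefProd n a r)⁻¹ := by
  rw [rotProd_eq_conj a r, conj_pow]

theorem forall_commute_prefProd_iff {g : G} :
    (∀ r ≤ n, Commute (prefProd n a r) g) ↔ ∀ i, Commute (a i) g := by
  refine ⟨fun h i => ?_, fun h r _ => Commute.prefProd_left a h r⟩
  have hsucc := h (i + 1) i.2
  rw [prefProd_succ a i.2] at hsucc
  simpa [mul_assoc] using hsucc.mul_left (h i i.2.le).inv_left

end Group

theorem rotation_powers_eq_iff_commute_general {G : Type*} [Group G] (n : ℕ)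
    (a : Fin n → G) (m : ℕ) :
    ((∀ r : ℕ, r < n → rotProd n a r ^ m = rotProd n a 0 ^ m) ↔
      (∀ i : Fin n, Commute (a i) (rotProd n a 0 ^ m))) ∧
    (∀ r : ℕ, r < n →
      rotProd n a r ^ m = prefProd n a r * rotProd n a 0 ^ m * (prefProd n a r)⁻¹) := by
  refine ⟨?_, fun r _ => rotProd_pow_eq_conj a r m⟩
  rw [← forall_commute_prefProd_iff]
  have hconj_eq (r : ℕ) : rotProd n a r ^ m = rotProd n a 0 ^ m ↔
      Commute (prefProd n a r) (rotProd n a 0 ^ m) := by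
    rw [rotProd_pow_eq_conj, mul_inv_eq_iff_eq_mul]
    rfl
  refine ⟨fun h r hr => ?_, fun h r hr => (hconj_eq r).2 (h r hr.le)⟩
  rcases hr.lt_or_eq with hr | rfl
  · exact (hconj_eq r).1 (h r hr)
  · rw [prefProd_self]
    exact Commute.self_pow _ _

/-- **Lemma.** In a group `G`, for `a₁, …, aₙ ∈ G` and `m ≥ 1` the following are equivalent:
(1) the `m`-th powers of all `n` cyclic rotations of `aₙaₙ₋₁⋯a₁` coincide;
(2) every `aᵢ` commutes with `(aₙaₙ₋₁⋯a₁)^m`.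
In particular `(aₖ₋₁⋯a₁aₙ⋯aₖ)^m = (aₖ₋₁⋯a₁)(aₙ⋯a₁)^m(aₖ₋₁⋯a₁)⁻¹` for every `1 ≤ k ≤ n`. -/
theorem rotation_powers_eq_iff_commute {G : Type*} [Group G] (n : ℕ) (hn : 1 ≤ n)
    (a : Fin n → G) (m : ℕ) (hm : 0 < m) :
    ((∀ r : ℕ, r < n → rotProd n a r ^ m = rotProd n a 0 ^ m) ↔
      (∀ i : Fin n, Commute (a i) (rotProd n a 0 ^ m))) ∧
    (∀ r : ℕ, r < n →
      rotProd n a r ^ m = prefProd n a r * rotProd n a 0 ^ m * (prefProd n a r)⁻¹) :=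
  rotation_powers_eq_iff_commute_general n a m
end

section
/- Let n ≥ 1, m ≥ 0, and let w₁,…,wₘ be elements of the free group on generators μ₁,…,μₙ. Let G′ be the presented group with generators μ₁,…,μₙ, σ₁, σ₂, σ₃ and defining relations [μᵢ, σⱼ] = e for all i ∈ {1,…,n} and j ∈ {1,2,3}, [σⱼ, σₖ] = e for all j, k ∈ {1,2,3}, w₁ = ⋯ = wₘ = e, and μ₁μ₂⋯μₙσ₁σ₂σ₃ = e. Then the quotient of G′ by the normal closure of the three elements σ₁σ₂, σ₂σ₃, σ₃σ₁ is isomorphic to the presented group ⟨μ₁,…,μₙ | [μᵢ, μ₁μ₂⋯μₙ] = e for i ∈ {1,…,n}; w₁ = ⋯ = wₘ = e; (μ₁μ₂⋯μₙ)² = e⟩. -/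
open scoped commutatorElement

/-- The product `μ₁μ₂⋯μₙ` in the free group on `μ₁, …, μₙ`. -/
def prodMu (n : ℕ) : FreeGroup (Fin n) :=
  (List.ofFn fun i : Fin n => FreeGroup.of i).prod

/-- The relators of `G′`: `[μᵢ, σⱼ] = e`, `[σⱼ, σₖ] = e`, `w₁ = ⋯ = wₘ = e` and
`μ₁⋯μₙσ₁σ₂σ₃ = e`, in the free group on `μ₁, …, μₙ, σ₁, σ₂, σ₃`. -/
def relsBig (n m : ℕ) (w : Fin m → FreeGroup (Fin n)) :
    Set (FreeGroup (Fin n ⊕ Fin 3)) :=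
  {r | (∃ (i : Fin n) (j : Fin 3),
          r = ⁅(FreeGroup.of (Sum.inl i) : FreeGroup (Fin n ⊕ Fin 3)),
            FreeGroup.of (Sum.inr j)⁆) ∨
       (∃ j k : Fin 3, r = ⁅(FreeGroup.of (Sum.inr j) : FreeGroup (Fin n ⊕ Fin 3)),
          FreeGroup.of (Sum.inr k)⁆) ∨
       (∃ t : Fin m, r = FreeGroup.map Sum.inl (w t)) ∨
       r = (List.ofFn fun i : Fin n => FreeGroup.of (Sum.inl i)).prod *
             (List.ofFn fun j : Fin 3 => FreeGroup.of (Sum.inr j)).prod}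

/-- The meridian `σⱼ` in `G′`. -/
def sigma (n m : ℕ) (w : Fin m → FreeGroup (Fin n)) (j : Fin 3) :
    PresentedGroup (relsBig n m w) :=
  PresentedGroup.of (Sum.inr j)

/-- The relators of the target presentation: `[μᵢ, μ₁⋯μₙ] = e`, `w₁ = ⋯ = wₘ = e`,
`(μ₁⋯μₙ)² = e`. -/
def relsSmall (n m : ℕ) (w : Fin m → FreeGroup (Fin n)) : Set (FreeGroup (Fin n)) :=
  {r | (∃ i : Fin n, r = ⁅FreeGroup.of i, prodMu n⁆) ∨
       (∃ t : Fin m, r = w t) ∨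
       r = (prodMu n) ^ 2}

/-!
In the quotient, `σ₁σ₂ = σ₂σ₃ = σ₃σ₁ = e` forces `σ₁ = σ₂ = σ₃ =: s` with `s² = e`, and the
relation `μ₁⋯μₙσ₁σ₂σ₃ = e` then says `μ₁⋯μₙ = s⁻³ = s`. Eliminating `s`, the relations
`[μᵢ, σⱼ] = e` become `[μᵢ, μ₁⋯μₙ] = e`, `s² = e` becomes `(μ₁⋯μₙ)² = e`, and `[σⱼ, σₖ] = e` become
trivial. So `μᵢ ↦ μᵢ, σⱼ ↦ μ₁⋯μₙ` and `μᵢ ↦ μᵢ` are mutually inverse homomorphisms.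
-/

theorem eq_and_mul_self_eq_one_of_cyclic {G : Type*} [Group G] {a b c : G}
    (hab : a * b = 1) (hbc : b * c = 1) (hca : c * a = 1) : b = a ∧ c = a ∧ a * a = 1 := by
  have hb : b = a⁻¹ := eq_inv_of_mul_eq_one_right hab
  obtain rfl : c = a := by rw [eq_inv_of_mul_eq_one_right hbc, hb, inv_inv]
  exact ⟨hb.trans (inv_eq_of_mul_eq_one_right hca), rfl, hca⟩

theorem FreeGroup.lift_sumElim_comp_map_inl {α β G : Type*} [Group G] (f : α → G) (g : β → G) :
    (FreeGroup.lift (Sum.elim f g)).comp (FreeGroup.map Sum.inl) = FreeGroup.lift f :=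
  FreeGroup.ext_hom _ _ fun _ => by simp

theorem PresentedGroup.lift_of {α : Type*} (rels : Set (FreeGroup α)) :
    FreeGroup.lift (PresentedGroup.of (rels := rels)) = PresentedGroup.mk rels :=
  FreeGroup.ext_hom _ _ fun _ => by simp [PresentedGroup.of]

theorem map_inl_prodMu {n : ℕ} {β : Type*} :
    FreeGroup.map (Sum.inl : Fin n → Fin n ⊕ β) (prodMu n)
      = (List.ofFn fun i : Fin n => FreeGroup.of (Sum.inl i)).prod := by
  rw [prodMu, map_list_prod, List.map_ofFn]
  rfl

theorem List.prod_ofFn_three {M : Type*} [Monoid M] (f : Fin 3 → M) :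
    (List.ofFn f).prod = f 0 * f 1 * f 2 := by
  simp [List.ofFn_succ, mul_assoc]

section

variable {n m : ℕ} (w : Fin m → FreeGroup (Fin n))

theorem mk_prodMu_mul_self :
    PresentedGroup.mk (relsSmall n m w) (prodMu n) * PresentedGroup.mk _ (prodMu n) = 1 := by
  rw [← map_mul, ← sq]
  exact PresentedGroup.one_of_mem (Or.inr (Or.inr rfl))

theorem commute_of_mk_prodMu (i : Fin n) :
    Commute (PresentedGroup.of i : PresentedGroup (relsSmall n m w))
      (PresentedGroup.mk _ (prodMu n)) :=
  commutatorElement_eq_one_iff_commute.mp <| by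
    rw [PresentedGroup.of, ← map_commutatorElement]
    exact PresentedGroup.one_of_mem (Or.inl ⟨i, rfl⟩)

def inclMu : FreeGroup (Fin n) →* PresentedGroup (relsBig n m w) :=
  (PresentedGroup.mk _).comp (FreeGroup.map Sum.inl)

theorem inclMu_of (i : Fin n) : inclMu w (FreeGroup.of i) = PresentedGroup.of (Sum.inl i) :=
  rfl

theorem inclMu_rel (t : Fin m) : inclMu w (w t) = 1 :=
  PresentedGroup.one_of_mem (Or.inr (Or.inr (Or.inl ⟨t, rfl⟩)))

theorem inclMu_prodMu_mul_sigma :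
    inclMu w (prodMu n) * (sigma n m w 0 * sigma n m w 1 * sigma n m w 2) = 1 := by
  have h := PresentedGroup.one_of_mem (rels := relsBig n m w) (Or.inr (Or.inr (Or.inr rfl)))
  rwa [← map_inl_prodMu, List.prod_ofFn_three, map_mul] at h

theorem commute_of_sigma (i : Fin n) (j : Fin 3) :
    Commute (PresentedGroup.of (Sum.inl i) : PresentedGroup (relsBig n m w)) (sigma n m w j) :=
  commutatorElement_eq_one_iff_commute.mp <| by
    rw [PresentedGroup.of, sigma, PresentedGroup.of, ← map_commutatorElement]
    exact PresentedGroup.one_of_mem (Or.inl ⟨i, j, rfl⟩)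

theorem commute_of_inclMu_prodMu (i : Fin n) :
    Commute (PresentedGroup.of (Sum.inl i) : PresentedGroup (relsBig n m w))
      (inclMu w (prodMu n)) := by
  rw [eq_inv_of_mul_eq_one_left (inclMu_prodMu_mul_sigma w)]
  exact (((commute_of_sigma w i 0).mul_right (commute_of_sigma w i 1)).mul_right
    (commute_of_sigma w i 2)).inv_right

def meridianToSmall : Fin n ⊕ Fin 3 → PresentedGroup (relsSmall n m w) :=
  Sum.elim PresentedGroup.of fun _ => PresentedGroup.mk _ (prodMu n)

theorem lift_meridianToSmall_map_inl (x : FreeGroup (Fin n)) :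
    FreeGroup.lift (meridianToSmall w) (FreeGroup.map Sum.inl x) = PresentedGroup.mk _ x := by
  rw [meridianToSmall, ← MonoidHom.comp_apply, FreeGroup.lift_sumElim_comp_map_inl,
    PresentedGroup.lift_of]

theorem lift_meridianToSmall_eq_one :
    ∀ r ∈ relsBig n m w, FreeGroup.lift (meridianToSmall w) r = 1 := by
  have hP := mk_prodMu_mul_self w
  rintro r (⟨i, j, rfl⟩ | ⟨j, k, rfl⟩ | ⟨t, rfl⟩ | rfl)
  · simpa [meridianToSmall] using
      commutatorElement_eq_one_iff_commute.mpr (commute_of_mk_prodMu w i)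
  · simp [meridianToSmall]
  · rw [lift_meridianToSmall_map_inl]
    exact PresentedGroup.one_of_mem (Or.inr (Or.inl ⟨t, rfl⟩))
  · rw [← map_inl_prodMu, map_mul, lift_meridianToSmall_map_inl,
      List.prod_ofFn_three]
    simp only [map_mul, FreeGroup.lift_apply_of, meridianToSmall, Sum.elim_inr]
    rw [hP, one_mul, hP]

def toSmall : PresentedGroup (relsBig n m w) →* PresentedGroup (relsSmall n m w) :=
  PresentedGroup.toGroup (lift_meridianToSmall_eq_one w)

theorem toSmall_sigma (j : Fin 3) : toSmall w (sigma n m w j) = PresentedGroup.mk _ (prodMu n) :=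
  PresentedGroup.toGroup.of _

def meridianPairs : Set (PresentedGroup (relsBig n m w)) :=
  {sigma n m w 0 * sigma n m w 1, sigma n m w 1 * sigma n m w 2,
   sigma n m w 2 * sigma n m w 0}

theorem normalClosure_meridianPairs_le_ker_toSmall :
    Subgroup.normalClosure (meridianPairs w) ≤ (toSmall w).ker := by
  refine Subgroup.normalClosure_le_normal ?_
  rintro _ (rfl | rfl | rfl) <;>
    simp only [SetLike.mem_coe, MonoidHom.mem_ker, map_mul, toSmall_sigma, mk_prodMu_mul_self]

theorem mk_sigma_eq_and_mul_self_eq_one :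
    ((sigma n m w 1 : PresentedGroup (relsBig n m w) ⧸ Subgroup.normalClosure (meridianPairs w))
        = sigma n m w 0) ∧
      ((sigma n m w 2 : _ ⧸ Subgroup.normalClosure (meridianPairs w)) = sigma n m w 0) ∧
      ((sigma n m w 0 : _ ⧸ Subgroup.normalClosure (meridianPairs w)) * sigma n m w 0 = 1) := by
  have h {x} (hx : x ∈ meridianPairs w) :
      (x : _ ⧸ Subgroup.normalClosure (meridianPairs w)) = 1 :=
    (QuotientGroup.eq_one_iff x).2 (Subgroup.subset_normalClosure hx)
  exact eq_and_mul_self_eq_one_of_cyclic (h (Or.inl rfl)) (h (Or.inr (Or.inl rfl)))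
    (h (Or.inr (Or.inr rfl)))

theorem mk_sigma_eq (j : Fin 3) :
    ((sigma n m w j : PresentedGroup (relsBig n m w) ⧸ Subgroup.normalClosure (meridianPairs w))
      = sigma n m w 0) := by
  obtain ⟨h1, h2, -⟩ := mk_sigma_eq_and_mul_self_eq_one w
  fin_cases j
  exacts [rfl, h1, h2]

theorem mk_inclMu_prodMu :
    ((inclMu w (prodMu n) : PresentedGroup (relsBig n m w) ⧸
      Subgroup.normalClosure (meridianPairs w)) = sigma n m w 0) := by
  obtain ⟨h1, h2, hs⟩ := mk_sigma_eq_and_mul_self_eq_one w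
  rw [eq_inv_of_mul_eq_one_left (inclMu_prodMu_mul_sigma w), QuotientGroup.mk_inv,
    QuotientGroup.mk_mul, QuotientGroup.mk_mul, h1, h2, hs, one_mul]
  exact inv_eq_of_mul_eq_one_right hs

theorem lift_of_inl_eq_mk_inclMu :
    FreeGroup.lift (fun i => ((PresentedGroup.of (Sum.inl i) : PresentedGroup (relsBig n m w)) :
        _ ⧸ Subgroup.normalClosure (meridianPairs w)))
      = (QuotientGroup.mk' _).comp (inclMu w) :=
  FreeGroup.ext_hom _ _ fun i => by simp [inclMu_of]

theorem lift_of_inl_eq_one :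
    ∀ r ∈ relsSmall n m w, FreeGroup.lift (fun i =>
      ((PresentedGroup.of (Sum.inl i) : PresentedGroup (relsBig n m w)) :
        _ ⧸ Subgroup.normalClosure (meridianPairs w))) r = 1 := by
  rw [lift_of_inl_eq_mk_inclMu]
  rintro r (⟨i, rfl⟩ | ⟨t, rfl⟩ | rfl)
  · rw [MonoidHom.comp_apply, map_commutatorElement, inclMu_of,
      commutatorElement_eq_one_iff_commute.mpr (commute_of_inclMu_prodMu w i), map_one]
  · rw [MonoidHom.comp_apply, inclMu_rel, map_one]
  · rw [map_pow, sq, MonoidHom.comp_apply, QuotientGroup.mk'_apply, mk_inclMu_prodMu]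
    exact (mk_sigma_eq_and_mul_self_eq_one w).2.2

def fromSmall :
    PresentedGroup (relsSmall n m w) →*
      PresentedGroup (relsBig n m w) ⧸ Subgroup.normalClosure (meridianPairs w) :=
  PresentedGroup.toGroup (lift_of_inl_eq_one w)

def ofQuotient :
    PresentedGroup (relsBig n m w) ⧸ Subgroup.normalClosure (meridianPairs w) →*
      PresentedGroup (relsSmall n m w) :=
  QuotientGroup.lift _ (toSmall w) (normalClosure_meridianPairs_le_ker_toSmall w)

theorem fromSmall_comp_mk :
    (fromSmall w).comp (PresentedGroup.mk _) = (QuotientGroup.mk' _).comp (inclMu w) :=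
  lift_of_inl_eq_mk_inclMu w

theorem ofQuotient_comp_fromSmall : (ofQuotient w).comp (fromSmall w) = MonoidHom.id _ :=
  PresentedGroup.ext fun i => by
    simp only [fromSmall, ofQuotient, MonoidHom.comp_apply, PresentedGroup.toGroup.of,
      QuotientGroup.lift_mk, toSmall, meridianToSmall, Sum.elim_inl, MonoidHom.id_apply]

theorem fromSmall_comp_ofQuotient : (fromSmall w).comp (ofQuotient w) = MonoidHom.id _ := by
  refine QuotientGroup.monoidHom_ext _ (PresentedGroup.ext ?_)
  rintro (i | j)
  · change fromSmall w (toSmall w (PresentedGroup.of (Sum.inl i))) = _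
    rw [toSmall, PresentedGroup.toGroup.of]
    exact PresentedGroup.toGroup.of _
  · change fromSmall w (toSmall w (sigma n m w j)) = sigma n m w j
    rw [toSmall_sigma, ← MonoidHom.comp_apply, fromSmall_comp_mk, MonoidHom.comp_apply,
      QuotientGroup.mk'_apply, mk_inclMu_prodMu, mk_sigma_eq w j]

end

theorem quotient_by_coordinate_meridians_general (n m : ℕ)
    (w : Fin m → FreeGroup (Fin n)) :
    Nonempty ((PresentedGroup (relsBig n m w) ⧸
        Subgroup.normalClosure
          {sigma n m w 0 * sigma n m w 1, sigma n m w 1 * sigma n m w 2,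
           sigma n m w 2 * sigma n m w 0}) ≃*
      PresentedGroup (relsSmall n m w)) :=
  ⟨MonoidHom.toMulEquiv (ofQuotient w) (fromSmall w) (fromSmall_comp_ofQuotient w)
    (ofQuotient_comp_fromSmall w)⟩

/-- **Theorem.** The quotient of
`G′ = ⟨μ₁, …, μₙ, σ₁, σ₂, σ₃ | [μᵢ,σⱼ] = [σⱼ,σₖ] = e, w₁ = ⋯ = wₘ = e, μ₁⋯μₙσ₁σ₂σ₃ = e⟩`
by the normal closure of `σ₁σ₂, σ₂σ₃, σ₃σ₁` is isomorphic to
`⟨μ₁, …, μₙ | [μᵢ, μ₁⋯μₙ] = e, w₁ = ⋯ = wₘ = e, (μ₁⋯μₙ)² = e⟩`. -/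
theorem quotient_by_coordinate_meridians (n m : ℕ) (hn : 1 ≤ n)
    (w : Fin m → FreeGroup (Fin n)) :
    Nonempty ((PresentedGroup (relsBig n m w) ⧸
        Subgroup.normalClosure
          {sigma n m w 0 * sigma n m w 1, sigma n m w 1 * sigma n m w 2,
           sigma n m w 2 * sigma n m w 0}) ≃*
      PresentedGroup (relsSmall n m w)) :=
  quotient_by_coordinate_meridians_general n m w
end
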